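/- For every real N > 1 there exist multi-indices α, β ∈ ℕⁿ and a constant C > 0, depending only on n, N, ε and φ (in particular independent of δ, k and Υ), such that for every integer k with 0 ≤ k ≤ s, where s is the unique integer with 2^s < δ^{−2ε} ≤ 2^{s+1}, and every Υ ∈ S_{α,β}(ℝⁿ) one has ∫_{ℝⁿ} (1 + 2^{−(k+1)} |x|)^N |η₀^k(x)| dx ≤ C δ^{−2(N+1)ε} 2^{−k}. -/

import Mathlib

open MeasureTheory SchwartzMap Real Filter
open scoped FourierTransform Convolution Topology

noncomputable section

/-- The anisotropic scaling `x ↦ (x₁/δ, …, x_{n−1}/δ, x_n)`. -/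
def scaleI (n : ℕ) (δ : ℝ) (x : EuclideanSpace ℝ (Fin n)) : EuclideanSpace ℝ (Fin n) :=
  WithLp.toLp 2 (fun i => if (i : ℕ) < n - 1 then x i / δ else x i)

/-- `g_I(x) = δ^{−(n−1)} g(x₁/δ, …, x_{n−1}/δ, x_n)`. -/
def funI (n : ℕ) (δ : ℝ) (g : EuclideanSpace ℝ (Fin n) → ℂ) :
    EuclideanSpace ℝ (Fin n) → ℂ :=
  fun x => ((δ ^ (n - 1) : ℝ))⁻¹ • g (scaleI n δ x)

/-- Partial derivative in the `i`-th coordinate direction. -/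
def pderivI (n : ℕ) (i : Fin n) (f : EuclideanSpace ℝ (Fin n) → ℂ) :
    EuclideanSpace ℝ (Fin n) → ℂ :=
  fun x => fderiv ℝ f x (EuclideanSpace.single i 1)

/-- Multi-index partial derivative `∂^β`. -/
def mderiv (n : ℕ) (β : Fin n → ℕ) (f : EuclideanSpace ℝ (Fin n) → ℂ) :
    EuclideanSpace ℝ (Fin n) → ℂ :=
  (List.finRange n).foldr (fun i g => (pderivI n i)^[β i] g) f

/-- `Υ ∈ S_{α,β}(ℝⁿ)`. -/
def memS (n : ℕ) (α β : Fin n → ℕ)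
    (Υ : SchwartzMap (EuclideanSpace ℝ (Fin n)) ℂ) : Prop :=
  ∀ α' β' : Fin n → ℕ, (∑ i, α' i) ≤ (∑ i, α i) → (∑ i, β' i) ≤ (∑ i, β i) →
    ∀ x : EuclideanSpace ℝ (Fin n),
      ‖(∏ i, (x i) ^ (α' i)) • mderiv n β' (⇑Υ) x‖ ≤ 1

/-!
The weight `(1 + ‖x‖) ^ N` is submultiplicative, so the weighted `L¹` norm of a convolution is at
most the product of the weighted norms of the factors. The anisotropic rescaling `g ↦ g_I` and the
dilations `g ↦ g_t` with `t ≤ 1` are linear changes of variables, normalised by their Jacobian,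
that only enlarge `‖x‖`, so they do not increase the weighted norm. By Fourier uniqueness `Ψ₀ = φ`,
while `Ψ₁` and `Φ_k` are differences of two such dilations of `φ`; and `Υ ∈ S_{α,β}` with
`α = (m, …, m)`, `m > N + n`, decays like `(1 + ‖x‖) ^ (-m)` uniformly in `Υ`. Hence the weighted
norm of `η₀^k`, which dominates the left-hand side, is bounded independently of `δ`, `k` and `Υ`,
while `2 ^ k ≤ 2 ^ s < δ ^ (-2ε)` makes `δ ^ (-2(N+1)ε) 2 ^ (-k) ≥ 1`.
-/

open scoped ENNReal RealInnerProductSpace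

section WeightedLIntegral

variable {G F : Type*} [NormedAddCommGroup G] [NormedAddCommGroup F] {N : ℝ}

lemma one_add_norm_add_rpow_le (hN : 0 ≤ N) (x y : G) :
    (1 + ‖x + y‖) ^ N ≤ (1 + ‖x‖) ^ N * (1 + ‖y‖) ^ N := by
  rw [← mul_rpow (by positivity) (by positivity)]
  gcongr
  nlinarith [norm_add_le x y, norm_nonneg x, norm_nonneg y]

variable [MeasurableSpace G] {μ : Measure G}

def weightedLIntegral (N : ℝ) (μ : Measure G) (p : G → ℝ≥0∞) : ℝ≥0∞ :=
  ∫⁻ x, ENNReal.ofReal ((1 + ‖x‖) ^ N) * p x ∂μ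

lemma weightedLIntegral_mono {p q : G → ℝ≥0∞} (h : p ≤ q) :
    weightedLIntegral N μ p ≤ weightedLIntegral N μ q :=
  lintegral_mono fun x => by gcongr; exact h x

lemma weightedLIntegral_le_of_decay {f : G → F} {m : ℕ} {c : ℝ}
    (hf : ∀ x, (1 + ‖x‖) ^ m * ‖f x‖ ≤ c) :
    weightedLIntegral N μ (‖f ·‖ₑ) ≤
      ENNReal.ofReal c * ∫⁻ x, ENNReal.ofReal ((1 + ‖x‖) ^ (N - m)) ∂μ := by
  rw [← lintegral_const_mul' _ _ ENNReal.ofReal_ne_top]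
  refine lintegral_mono fun x => ?_
  have hx : 0 < 1 + ‖x‖ := by positivity
  dsimp only
  rw [← ofReal_norm (f x), ← ENNReal.ofReal_mul (by positivity),
    ← ENNReal.ofReal_mul' (by positivity)]
  refine ENNReal.ofReal_le_ofReal ?_
  calc (1 + ‖x‖) ^ N * ‖f x‖ = ((1 + ‖x‖) ^ m * ‖f x‖) * (1 + ‖x‖) ^ (N - m) := by
        rw [Real.rpow_sub hx, Real.rpow_natCast]; field_simp
    _ ≤ c * (1 + ‖x‖) ^ (N - m) := by gcongr; exact hf x

lemma integral_one_add_mul_norm_rpow_mul_le {c : ℝ} (hc0 : 0 ≤ c) (hc1 : c ≤ 1) (hN : 0 ≤ N)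
    {f : G → F} {M : ℝ≥0∞} (hM : M ≠ ⊤) (hf : weightedLIntegral N μ (‖f ·‖ₑ) ≤ M) :
    ∫ x, (1 + c * ‖x‖) ^ N * ‖f x‖ ∂μ ≤ M.toReal := by
  refine (Real.le_norm_self _).trans <| (norm_integral_le_lintegral_norm _).trans <|
    ENNReal.toReal_mono hM <| le_trans (lintegral_mono fun x => ?_) hf
  dsimp only
  rw [norm_mul, norm_norm, ← ofReal_norm (f x), ← ENNReal.ofReal_mul (by positivity),
    Real.norm_of_nonneg (by positivity)]
  gcongr
  exact mul_le_of_le_one_left (norm_nonneg x) hc1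

variable [BorelSpace G]

lemma weightedLIntegral_add {p : G → ℝ≥0∞} (hp : AEMeasurable p μ) (q : G → ℝ≥0∞) :
    weightedLIntegral N μ (p + q) = weightedLIntegral N μ p + weightedLIntegral N μ q := by
  simp only [weightedLIntegral, Pi.add_apply, mul_add]
  exact lintegral_add_left' (by fun_prop) _

lemma weightedLIntegral_enorm_add_le {f g : G → F} (hf : AEStronglyMeasurable f μ) :
    weightedLIntegral N μ (‖(f + g) ·‖ₑ) ≤
      weightedLIntegral N μ (‖f ·‖ₑ) + weightedLIntegral N μ (‖g ·‖ₑ) :=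
  (weightedLIntegral_mono fun x => enorm_add_le (f x) (g x)).trans_eq
    (weightedLIntegral_add hf.enorm _)

lemma weightedLIntegral_enorm_sub_le {f g : G → F} (hf : AEStronglyMeasurable f μ) :
    weightedLIntegral N μ (‖(f - g) ·‖ₑ) ≤
      weightedLIntegral N μ (‖f ·‖ₑ) + weightedLIntegral N μ (‖g ·‖ₑ) :=
  (weightedLIntegral_mono fun _ => enorm_sub_le).trans_eq (weightedLIntegral_add hf.enorm _)

variable [SecondCountableTopology G] [SFinite μ] [μ.IsAddLeftInvariant]

lemma weightedLIntegral_lconvolution_le (hN : 0 ≤ N) {p q : G → ℝ≥0∞}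
    (hp : AEMeasurable p μ) (hq : AEMeasurable q μ) :
    weightedLIntegral N μ (p ⋆ₗ[μ] q) ≤ weightedLIntegral N μ p * weightedLIntegral N μ q := by
  set w : G → ℝ≥0∞ := fun x => ENNReal.ofReal ((1 + ‖x‖) ^ N)
  have hw : Measurable w := by fun_prop
  have hweight (x y : G) : w x ≤ w y * w (-y + x) := by
    rw [← ENNReal.ofReal_mul (by positivity)]
    refine ENNReal.ofReal_le_ofReal ?_
    simpa using one_add_norm_add_rpow_le hN y (-y + x)
  calc ∫⁻ x, w x * ∫⁻ y, p y * q (-y + x) ∂μ ∂μ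
      ≤ ∫⁻ x, ∫⁻ y, (w y * p y) * (w (-y + x) * q (-y + x)) ∂μ ∂μ := by
        refine lintegral_mono fun x => ?_
        rw [← lintegral_const_mul'' _ (by fun_prop)]
        refine lintegral_mono fun y => ?_
        calc w x * (p y * q (-y + x)) ≤ (w y * w (-y + x)) * (p y * q (-y + x)) := by
              gcongr; exact hweight x y
          _ = _ := by ring
    _ = ∫⁻ y, ∫⁻ x, (w y * p y) * (w (-y + x) * q (-y + x)) ∂μ ∂μ :=
        lintegral_lintegral_swap (by fun_prop)
    _ = ∫⁻ y, (w y * p y) * ∫⁻ x, w x * q x ∂μ ∂μ := by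
        refine lintegral_congr fun y => ?_
        rw [lintegral_const_mul'' _ (by fun_prop), lintegral_add_left_eq_self (fun x => w x * q x)]
    _ = weightedLIntegral N μ p * weightedLIntegral N μ q :=
        lintegral_mul_const'' _ (by fun_prop)

end WeightedLIntegral

section Convolution

variable {𝕜 G E E' E'' F F' : Type*} [NontriviallyNormedField 𝕜]
  [NormedAddCommGroup G] [MeasurableSpace G] {μ : Measure G}
  [NormedAddCommGroup E] [NormedSpace 𝕜 E] [NormedAddCommGroup E'] [NormedSpace 𝕜 E']
  [NormedAddCommGroup E''] [NormedSpace 𝕜 E'']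
  [NormedAddCommGroup F] [NormedSpace 𝕜 F] [NormedSpace ℝ F]
  [NormedAddCommGroup F'] [NormedSpace 𝕜 F'] [NormedSpace ℝ F']

lemma enorm_convolution_le_lconvolution {L : E →L[𝕜] E' →L[𝕜] F} (hL : ‖L‖ ≤ 1)
    (f : G → E) (g : G → E') (x : G) :
    ‖(f ⋆[L, μ] g) x‖ₑ ≤ ((‖f ·‖ₑ) ⋆ₗ[μ] (‖g ·‖ₑ)) x := by
  refine (enorm_integral_le_lintegral_enorm _).trans (lintegral_mono fun t => ?_)
  calc ‖L (f t) (g (x - t))‖ₑ ≤ ‖L‖ₑ * ‖f t‖ₑ * ‖g (x - t)‖ₑ := L.le_opENorm₂ _ _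
    _ ≤ 1 * ‖f t‖ₑ * ‖g (-t + x)‖ₑ := by
        rw [neg_add_eq_sub]
        gcongr
        simpa [← ofReal_norm] using ENNReal.ofReal_le_ofReal hL
    _ = _ := by rw [one_mul]

variable [BorelSpace G] [SecondCountableTopology G] [SFinite μ] [μ.IsAddLeftInvariant] {N : ℝ}

lemma weightedLIntegral_convolution_convolution_le (hN : 0 ≤ N)
    {L₁ : E →L[𝕜] E' →L[𝕜] F} {L₂ : F →L[𝕜] E'' →L[𝕜] F'} (hL₁ : ‖L₁‖ ≤ 1) (hL₂ : ‖L₂‖ ≤ 1)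
    {f : G → E} {g : G → E'} {u : G → E''} (hf : AEStronglyMeasurable f μ)
    (hg : AEStronglyMeasurable g μ) (hu : AEStronglyMeasurable u μ) :
    weightedLIntegral N μ (‖((f ⋆[L₁, μ] g) ⋆[L₂, μ] u) ·‖ₑ) ≤
      weightedLIntegral N μ (‖f ·‖ₑ) * weightedLIntegral N μ (‖g ·‖ₑ) *
        weightedLIntegral N μ (‖u ·‖ₑ) := by
  have hpointwise (x : G) : ‖((f ⋆[L₁, μ] g) ⋆[L₂, μ] u) x‖ₑ ≤
      (((‖f ·‖ₑ) ⋆ₗ[μ] (‖g ·‖ₑ)) ⋆ₗ[μ] (‖u ·‖ₑ)) x :=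
    (enorm_convolution_le_lconvolution hL₂ _ _ x).trans <| lintegral_mono fun t => by
      gcongr; exact enorm_convolution_le_lconvolution hL₁ f g t
  calc _ ≤ weightedLIntegral N μ (((‖f ·‖ₑ) ⋆ₗ[μ] (‖g ·‖ₑ)) ⋆ₗ[μ] (‖u ·‖ₑ)) :=
        weightedLIntegral_mono hpointwise
    _ ≤ weightedLIntegral N μ ((‖f ·‖ₑ) ⋆ₗ[μ] (‖g ·‖ₑ)) * weightedLIntegral N μ (‖u ·‖ₑ) :=
        weightedLIntegral_lconvolution_le hN (aemeasurable_lconvolution hf.enorm hg.enorm) hu.enorm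
    _ ≤ _ := by
        gcongr
        exact weightedLIntegral_lconvolution_le hN hf.enorm hg.enorm

end Convolution

section ChangeOfVariables

variable {V : Type*} [NormedAddCommGroup V] [NormedSpace ℝ V] [FiniteDimensional ℝ V]

lemma det_ne_zero_of_norm_le_norm_apply {T : V →ₗ[ℝ] V} (hT : ∀ x, ‖x‖ ≤ ‖T x‖) :
    LinearMap.det T ≠ 0 := by
  have hker : LinearMap.ker T = ⊥ :=
    LinearMap.ker_eq_bot'.2 fun x hx => norm_le_zero_iff.1 (by simpa [hx] using hT x)
  exact (LinearMap.isUnit_det T ((LinearMap.isUnit_iff_ker_eq_bot T).2 hker)).ne_zero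

variable [MeasurableSpace V] [BorelSpace V] {μ : Measure V} [μ.IsAddHaarMeasure] {N : ℝ}

lemma weightedLIntegral_comp_linearMap_le (hN : 0 ≤ N) {T : V →ₗ[ℝ] V}
    (hT : ∀ x, ‖x‖ ≤ ‖T x‖) {p : V → ℝ≥0∞} (hp : Measurable p) :
    weightedLIntegral N μ (fun x => ENNReal.ofReal |LinearMap.det T| * p (T x)) ≤
      weightedLIntegral N μ p := by
  set w : V → ℝ≥0∞ := fun x => ENNReal.ofReal ((1 + ‖x‖) ^ N)
  have hdet := det_ne_zero_of_norm_le_norm_apply hT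
  calc ∫⁻ x, w x * (ENNReal.ofReal |LinearMap.det T| * p (T x)) ∂μ
      ≤ ∫⁻ x, ENNReal.ofReal |LinearMap.det T| * (w (T x) * p (T x)) ∂μ := by
        refine lintegral_mono fun x => ?_
        rw [mul_left_comm]
        gcongr
        exact ENNReal.ofReal_le_ofReal (by gcongr; exact hT x)
    _ = ENNReal.ofReal |LinearMap.det T| * ∫⁻ y, w y * p y ∂(Measure.map T μ) := by
        rw [lintegral_const_mul' _ _ ENNReal.ofReal_ne_top,
          lintegral_map (by fun_prop) T.continuous_of_finiteDimensional.measurable]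
    _ = weightedLIntegral N μ p := by
        rw [Measure.map_linearMap_addHaar_eq_smul_addHaar μ hdet, lintegral_smul_measure,
          smul_eq_mul, ← mul_assoc, ← ENNReal.ofReal_mul (abs_nonneg _), ← abs_mul,
          mul_inv_cancel₀ hdet, abs_one, ENNReal.ofReal_one, one_mul]
        rfl

lemma lintegral_one_add_norm_rpow_sub_ne_top {m : ℕ} (hm : N + Module.finrank ℝ V < m) :
    ∫⁻ x, ENNReal.ofReal ((1 + ‖x‖) ^ (N - m)) ∂μ ≠ ⊤ := by
  have h := integrable_one_add_norm (μ := μ) (r := m - N) (by linarith)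
  simpa only [neg_sub] using h.lintegral_lt_top.ne

lemma SchwartzMap.weightedLIntegral_ne_top {E : Type*} [NormedAddCommGroup E] [NormedSpace ℝ E]
    (φ : 𝓢(V, E)) (N : ℝ) : weightedLIntegral N μ (‖φ ·‖ₑ) ≠ ⊤ := by
  set m := ⌈N⌉₊ + Module.finrank ℝ V + 1
  have hm : N + Module.finrank ℝ V < m := by
    have := Nat.le_ceil N
    simp only [m]; push_cast; linarith
  refine ne_top_of_le_ne_top ?_ (weightedLIntegral_le_of_decay fun x => by
    simpa using φ.one_add_le_sup_seminorm_apply (𝕜 := ℝ) (m := (m, 0)) le_rfl le_rfl x)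
  exact ENNReal.mul_ne_top ENNReal.ofReal_ne_top (lintegral_one_add_norm_rpow_sub_ne_top hm)

end ChangeOfVariables

section Dilation

variable {V E : Type*} [NormedAddCommGroup V] [InnerProductSpace ℝ V] [NormedAddCommGroup E]
  [NormedSpace ℂ E]

def dilate (t : ℝ) (f : V → E) (x : V) : E := (t ^ Module.finrank ℝ V)⁻¹ • f (t⁻¹ • x)

lemma Continuous.dilate {f : V → E} (hf : Continuous f) (t : ℝ) : Continuous (dilate t f) :=
  (hf.comp (continuous_const_smul _)).const_smul _

lemma SchwartzMap.exists_coe_eq_dilate (φ : 𝓢(V, E)) {t : ℝ} (ht : t ≠ 0) :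
    ∃ χ : 𝓢(V, E), ⇑χ = dilate t ⇑φ :=
  ⟨(t ^ Module.finrank ℝ V)⁻¹ • compCLMOfContinuousLinearEquiv ℝ
    (ContinuousLinearEquiv.smulLeft (Units.mk0 t⁻¹ (inv_ne_zero ht))) φ, rfl⟩

variable [FiniteDimensional ℝ V] [MeasurableSpace V] [BorelSpace V] {N : ℝ}

lemma weightedLIntegral_dilate_le (hN : 0 ≤ N) {t : ℝ} (ht0 : 0 < t) (ht1 : t ≤ 1)
    {f : V → E} (hf : Continuous f) :
    weightedLIntegral N volume (‖dilate t f ·‖ₑ) ≤ weightedLIntegral N volume (‖f ·‖ₑ) := by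
  have hnorm (x : V) : ‖x‖ ≤ ‖(t⁻¹ • LinearMap.id : V →ₗ[ℝ] V) x‖ := by
    simpa [norm_smul, abs_of_pos ht0] using
      le_mul_of_one_le_left (norm_nonneg x) ((one_le_inv₀ ht0).2 ht1)
  refine le_of_eq_of_le ?_ (weightedLIntegral_comp_linearMap_le hN hnorm hf.enorm.measurable)
  congr 1 with x
  rw [dilate, enorm_smul, Real.enorm_eq_ofReal_abs, LinearMap.det_smul, LinearMap.det_id,
    mul_one, inv_pow]
  rfl

lemma fourier_dilate (f : V → E) {t : ℝ} (ht : 0 < t) (ξ : V) :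
    𝓕 (dilate t f) ξ = 𝓕 f (t • ξ) := by
  have hinner (x : V) : ⟪t⁻¹ • x, t • ξ⟫ = ⟪x, ξ⟫ := by
    rw [real_inner_smul_left, real_inner_smul_right, inv_mul_cancel_left₀ ht.ne']
  set g : V → E := fun y => 𝐞 (-⟪y, t • ξ⟫) • f y
  rw [Real.fourier_eq, Real.fourier_eq]
  calc ∫ x, 𝐞 (-⟪x, ξ⟫) • dilate t f x = (t ^ Module.finrank ℝ V)⁻¹ • ∫ x, g (t⁻¹ • x) := by
        rw [← integral_smul]
        simp only [g, dilate, hinner]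
        exact integral_congr_ae (.of_forall fun x => smul_comm _ _ _)
    _ = ∫ y, g y := by
        rw [Measure.integral_comp_inv_smul_of_nonneg volume g ht.le, smul_smul,
          inv_mul_cancel₀ (by positivity), one_smul]

variable [CompleteSpace E]

lemma SchwartzMap.eq_of_fourier_eq {ψ φ : 𝓢(V, E)} (h : ∀ ξ, 𝓕 ⇑ψ ξ = 𝓕 ⇑φ ξ) : ψ = φ :=
  (FourierTransform.fourierEquiv ℂ 𝓢(V, E)).injective (SchwartzMap.ext h)

lemma SchwartzMap.coe_eq_dilate_sub_dilate {ψ φ : 𝓢(V, E)} {t₁ t₂ : ℝ} (ht₁ : 0 < t₁)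
    (ht₂ : 0 < t₂) (h : ∀ ξ, 𝓕 ⇑ψ ξ = 𝓕 ⇑φ (t₁ • ξ) - 𝓕 ⇑φ (t₂ • ξ)) :
    ⇑ψ = dilate t₁ ⇑φ - dilate t₂ ⇑φ := by
  obtain ⟨χ₁, hχ₁⟩ := φ.exists_coe_eq_dilate ht₁.ne'
  obtain ⟨χ₂, hχ₂⟩ := φ.exists_coe_eq_dilate ht₂.ne'
  suffices ψ = χ₁ - χ₂ by rw [this, FunLike.coe_sub, hχ₁, hχ₂]
  have hsub : 𝓕 (χ₁ - χ₂) = 𝓕 χ₁ - 𝓕 χ₂ := (FourierTransform.fourierₗ ℂ 𝓢(V, E)).map_sub χ₁ χ₂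
  refine eq_of_fourier_eq fun ξ => ?_
  change _ = 𝓕 (χ₁ - χ₂) ξ
  rw [h, hsub, sub_apply, fourier_coe, fourier_coe, hχ₁, hχ₂, fourier_dilate _ ht₁,
    fourier_dilate _ ht₂]

lemma weightedLIntegral_le_two_mul_of_fourier_eq_sub (hN : 0 ≤ N) {ψ φ : 𝓢(V, E)} {t₁ t₂ : ℝ}
    (ht₁ : 0 < t₁) (ht₁' : t₁ ≤ 1) (ht₂ : 0 < t₂) (ht₂' : t₂ ≤ 1)
    (h : ∀ ξ, 𝓕 ⇑ψ ξ = 𝓕 ⇑φ (t₁ • ξ) - 𝓕 ⇑φ (t₂ • ξ)) :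
    weightedLIntegral N volume (‖ψ ·‖ₑ) ≤ 2 * weightedLIntegral N volume (‖φ ·‖ₑ) := by
  rw [SchwartzMap.coe_eq_dilate_sub_dilate ht₁ ht₂ h, two_mul]
  calc _ ≤ weightedLIntegral N volume (‖dilate t₁ ⇑φ ·‖ₑ) +
        weightedLIntegral N volume (‖dilate t₂ ⇑φ ·‖ₑ) :=
        weightedLIntegral_enorm_sub_le (φ.continuous.dilate t₁).aestronglyMeasurable
    _ ≤ _ := by gcongr <;> exact weightedLIntegral_dilate_le hN ‹_› ‹_› φ.continuous

lemma weightedLIntegral_add_le_three_mul (hN : 0 ≤ N) {t : ℝ} (ht0 : 0 < t) (ht1 : t ≤ 1)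
    {φ ψ₀ ψ₁ : 𝓢(V, E)} (h₀ : ∀ ξ, 𝓕 ⇑ψ₀ ξ = 𝓕 ⇑φ ξ)
    (h₁ : ∀ ξ, 𝓕 ⇑ψ₁ ξ = 𝓕 ⇑φ (t • ξ) - 𝓕 ⇑φ ξ) :
    weightedLIntegral N volume (‖(⇑ψ₀ + ⇑ψ₁) ·‖ₑ) ≤ 3 * weightedLIntegral N volume (‖φ ·‖ₑ) := by
  have hψ₁ := weightedLIntegral_le_two_mul_of_fourier_eq_sub hN ht0 ht1 one_pos le_rfl
    (ψ := ψ₁) (φ := φ) (by simpa only [one_smul] using h₁)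
  calc _ ≤ weightedLIntegral N volume (‖ψ₀ ·‖ₑ) + weightedLIntegral N volume (‖ψ₁ ·‖ₑ) :=
        weightedLIntegral_enorm_add_le ψ₀.continuous.aestronglyMeasurable
    _ ≤ weightedLIntegral N volume (‖φ ·‖ₑ) + 2 * weightedLIntegral N volume (‖φ ·‖ₑ) := by
        rw [SchwartzMap.eq_of_fourier_eq h₀]
        gcongr
    _ = _ := by ring

lemma weightedLIntegral_le_two_mul_of_fourier_eq_dyadic (hN : 0 ≤ N) {φ : 𝓢(V, E)}
    {Φ : ℕ → 𝓢(V, E)} (h₀ : ∀ ξ, 𝓕 ⇑(Φ 0) ξ = 𝓕 ⇑φ ξ)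
    (h : ∀ k : ℕ, 1 ≤ k → ∀ ξ, 𝓕 ⇑(Φ k) ξ =
      𝓕 ⇑φ (((2 : ℝ) ^ (-(k : ℝ))) • ξ) - 𝓕 ⇑φ (((2 : ℝ) ^ (1 - (k : ℝ))) • ξ)) (k : ℕ) :
    weightedLIntegral N volume (‖Φ k ·‖ₑ) ≤ 2 * weightedLIntegral N volume (‖φ ·‖ₑ) := by
  rcases Nat.eq_zero_or_pos k with rfl | hk
  · rw [SchwartzMap.eq_of_fourier_eq h₀]
    exact le_mul_of_one_le_left' one_le_two
  · have hk1 : (1 : ℝ) ≤ k := by exact_mod_cast hk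
    exact weightedLIntegral_le_two_mul_of_fourier_eq_sub hN (by positivity)
      (Real.rpow_le_one_of_one_le_of_nonpos one_le_two (by linarith)) (by positivity)
      (Real.rpow_le_one_of_one_le_of_nonpos one_le_two (by linarith)) (h k hk)

end Dilation

section AnisotropicScaling

variable {n : ℕ} {δ : ℝ}

def scaleILinearMap (n : ℕ) (δ : ℝ) :
    EuclideanSpace ℝ (Fin n) →ₗ[ℝ] EuclideanSpace ℝ (Fin n) where
  toFun := scaleI n δ
  map_add' x y := by ext i; simp only [scaleI, PiLp.add_apply]; split_ifs <;> ring
  map_smul' c x := by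
    ext i; simp only [scaleI, PiLp.smul_apply, smul_eq_mul, RingHom.id_apply]; split_ifs <;> ring

lemma det_scaleILinearMap : LinearMap.det (scaleILinearMap n δ) = (δ ^ (n - 1))⁻¹ := by
  let b := (EuclideanSpace.basisFun (Fin n) ℝ).toBasis
  have hdiag : LinearMap.toMatrix b b (scaleILinearMap n δ) =
      Matrix.diagonal fun i : Fin n => if (i : ℕ) < n - 1 then δ⁻¹ else 1 := by
    ext i j
    rcases eq_or_ne i j with rfl | hij
    · simp [b, LinearMap.toMatrix_apply, scaleILinearMap, scaleI, div_eq_mul_inv]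
    · simp [b, LinearMap.toMatrix_apply, scaleILinearMap, scaleI, hij]
  rw [← LinearMap.det_toMatrix b, hdiag, Matrix.det_diagonal, Finset.prod_ite, Finset.prod_const,
    Finset.prod_const_one, mul_one, Fin.card_filter_val_lt, min_eq_right (Nat.sub_le n 1), inv_pow]

lemma norm_le_norm_scaleI (hδ0 : 0 < δ) (hδ1 : δ ≤ 1) (x : EuclideanSpace ℝ (Fin n)) :
    ‖x‖ ≤ ‖scaleI n δ x‖ := by
  rw [EuclideanSpace.norm_eq, EuclideanSpace.norm_eq]
  gcongr with i
  simp only [scaleI]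
  split_ifs
  · rw [norm_div, Real.norm_of_nonneg hδ0.le]
    exact le_div_self (norm_nonneg _) hδ0 hδ1
  · rfl

lemma Continuous.funI {g : EuclideanSpace ℝ (Fin n) → ℂ} (hg : Continuous g) :
    Continuous (funI n δ g) :=
  (hg.comp (scaleILinearMap n δ).continuous_of_finiteDimensional).const_smul ((δ ^ (n - 1) : ℝ)⁻¹)

lemma weightedLIntegral_funI_le {N : ℝ} (hN : 0 ≤ N) (hδ0 : 0 < δ) (hδ1 : δ ≤ 1)
    {g : EuclideanSpace ℝ (Fin n) → ℂ} (hg : Continuous g) :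
    weightedLIntegral N volume (‖funI n δ g ·‖ₑ) ≤ weightedLIntegral N volume (‖g ·‖ₑ) := by
  refine le_of_eq_of_le ?_ (weightedLIntegral_comp_linearMap_le hN (T := scaleILinearMap n δ)
    (norm_le_norm_scaleI hδ0 hδ1) hg.enorm.measurable)
  congr 1 with x
  rw [funI, enorm_smul, Real.enorm_eq_ofReal_abs, det_scaleILinearMap]
  rfl

end AnisotropicScaling

section Decay

variable {n : ℕ}

lemma mderiv_zero (f : EuclideanSpace ℝ (Fin n) → ℂ) : mderiv n 0 f = f := by
  simp [mderiv]

lemma one_add_norm_pow_mul_le_of_memS {m : ℕ} (hm : m ≠ 0) {Υ : 𝓢(EuclideanSpace ℝ (Fin n), ℂ)}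
    (hΥ : memS n (fun _ => m) 0 Υ) (x : EuclideanSpace ℝ (Fin n)) :
    (1 + ‖x‖) ^ m * ‖Υ x‖ ≤ (n + 1) ^ m := by
  have hmemS (α' : Fin n → ℕ) (hα' : ∑ i, α' i ≤ ∑ _ : Fin n, m) :
      ‖∏ i, x i ^ α' i‖ * ‖Υ x‖ ≤ 1 := by
    simpa [mderiv_zero, norm_smul] using hΥ α' 0 hα' le_rfl x
  -- With `v = ‖Υ x‖ ^ (1 / m)`, membership in `S_{α,β}` says `v ≤ 1` and `|x i| * v ≤ 1`.
  set v := ‖Υ x‖ ^ ((m : ℝ)⁻¹)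
  have hv0 : 0 ≤ v := by positivity
  have hvm : v ^ m = ‖Υ x‖ := Real.rpow_inv_natCast_pow (norm_nonneg _) hm
  have hv1 : v ≤ 1 := (pow_le_one_iff_of_nonneg hv0 hm).1 (by simpa [hvm] using hmemS 0 (by simp))
  have hcoord (i : Fin n) : |x i| * v ≤ 1 := by
    refine (pow_le_one_iff_of_nonneg (by positivity) hm).1 ?_
    have hsum : ∑ j, Pi.single (M := fun _ => ℕ) i m j ≤ ∑ _ : Fin n, m := by
      rw [Finset.sum_pi_single' i m]
      simpa using Nat.le_mul_of_pos_left m (Nat.zero_lt_of_lt i.2)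
    simpa [mul_pow, hvm, Pi.single_apply, Finset.prod_ite_eq'] using hmemS _ hsum
  have hnorm : ‖x‖ * v ≤ n := by
    have hsq : (‖x‖ * v) ^ 2 ≤ n := by
      rw [mul_pow, EuclideanSpace.norm_sq_eq, Finset.sum_mul]
      calc ∑ i, ‖x i‖ ^ 2 * v ^ 2 ≤ ∑ _ : Fin n, (1 : ℝ) := by
            gcongr with i
            rw [← mul_pow, Real.norm_eq_abs]
            exact pow_le_one₀ (by positivity) (hcoord i)
        _ = n := by simp
    have hn : (n : ℝ) ≤ (n : ℝ) ^ 2 := by exact_mod_cast Nat.le_self_pow two_ne_zero n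
    nlinarith [norm_nonneg x]
  calc (1 + ‖x‖) ^ m * ‖Υ x‖ = ((1 + ‖x‖) * v) ^ m := by rw [mul_pow, hvm]
    _ ≤ (n + 1) ^ m := by gcongr; linarith

end Decay

lemma one_le_rpow_mul_two_rpow {δ ε N : ℝ} {k s : ℕ} (hδ0 : 0 < δ) (hδ1 : δ ≤ 1) (hε : 0 ≤ ε)
    (hN : 0 ≤ N) (hks : k ≤ s) (hs : (2 : ℝ) ^ s < δ ^ (-(2 * ε))) :
    1 ≤ δ ^ (-(2 * (N + 1) * ε)) * (2 : ℝ) ^ (-(k : ℝ)) := by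
  have hδN : 1 ≤ δ ^ (-(2 * N * ε)) :=
    Real.one_le_rpow_of_pos_of_le_one_of_nonpos hδ0 hδ1 (by nlinarith)
  have hδk : 1 ≤ δ ^ (-(2 * ε)) * (2 : ℝ) ^ (-(k : ℝ)) := by
    rw [Real.rpow_neg zero_le_two, Real.rpow_natCast, ← div_eq_mul_inv, one_le_div (by positivity)]
    exact (pow_le_pow_right₀ one_le_two hks).trans hs.le
  calc 1 ≤ δ ^ (-(2 * N * ε)) * (δ ^ (-(2 * ε)) * (2 : ℝ) ^ (-(k : ℝ))) :=
        one_le_mul_of_one_le_of_one_le hδN hδk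
    _ = _ := by rw [← mul_assoc, ← Real.rpow_add hδ0]; ring_nf

theorem stmt_3_general
    (n : ℕ) (ε : ℝ) (hε : 0 < ε)
    (φ : SchwartzMap (EuclideanSpace ℝ (Fin n)) ℂ)
    (N : ℝ) (hN : 1 < N) :
    ∃ (α β : Fin n → ℕ) (C : ℝ), 0 < C ∧
      ∀ δ : ℝ, 0 < δ → δ < 1 → 2 ≤ δ ^ (-ε) →
      ∀ Ψ : ℕ → SchwartzMap (EuclideanSpace ℝ (Fin n)) ℂ,
        (∀ ξ, 𝓕 ⇑(Ψ 0) ξ = 𝓕 ⇑φ ξ) →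
        (∀ k : ℕ, 1 ≤ k → ∀ ξ, 𝓕 ⇑(Ψ k) ξ =
          𝓕 ⇑φ ((δ ^ ((k : ℝ) * ε)) • ξ) - 𝓕 ⇑φ ((δ ^ (((k : ℝ) - 1) * ε)) • ξ)) →
      ∀ Φ : ℕ → SchwartzMap (EuclideanSpace ℝ (Fin n)) ℂ,
        (∀ ξ, 𝓕 ⇑(Φ 0) ξ = 𝓕 ⇑φ ξ) →
        (∀ k : ℕ, 1 ≤ k → ∀ ξ, 𝓕 ⇑(Φ k) ξ =
          𝓕 ⇑φ (((2 : ℝ) ^ (-(k : ℝ))) • ξ) - 𝓕 ⇑φ (((2 : ℝ) ^ (1 - (k : ℝ))) • ξ)) →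
      ∀ s : ℕ, (2 : ℝ) ^ s < δ ^ (-(2 * ε)) → δ ^ (-(2 * ε)) ≤ (2 : ℝ) ^ (s + 1) →
      ∀ k : ℕ, k ≤ s →
      ∀ Υ : SchwartzMap (EuclideanSpace ℝ (Fin n)) ℂ, memS n α β Υ →
        (∫ x : EuclideanSpace ℝ (Fin n),
          (1 + (2 : ℝ) ^ (-((k : ℝ) + 1)) * ‖x‖) ^ N *
            ‖((funI n δ (⇑(Ψ 0) + ⇑(Ψ 1)) ⋆[ContinuousLinearMap.mul ℝ ℂ, volume] funI n δ ⇑(Φ k)) ⋆[ContinuousLinearMap.mul ℝ ℂ, volume] funI n δ ⇑Υ) x‖)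
          ≤ C * δ ^ (-(2 * (N + 1) * ε)) * (2 : ℝ) ^ (-(k : ℝ)) := by
  have hN0 : 0 ≤ N := by linarith
  set m := ⌈N⌉₊ + n + 1
  set K := ∫⁻ x : EuclideanSpace ℝ (Fin n), ENNReal.ofReal ((1 + ‖x‖) ^ (N - m))
  have hK : K ≠ ⊤ := lintegral_one_add_norm_rpow_sub_ne_top <| by
    have := Nat.le_ceil N
    simp only [m, finrank_euclideanSpace_fin]; push_cast; linarith
  set B := weightedLIntegral N volume (‖φ ·‖ₑ)
  set M := 3 * B * (2 * B) * (ENNReal.ofReal ((n + 1) ^ m) * K)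
  have hB : B ≠ ⊤ := φ.weightedLIntegral_ne_top N
  have hM : M ≠ ⊤ := by finiteness
  refine ⟨fun _ => m, 0, M.toReal + 1, by positivity, ?_⟩
  intro δ hδ0 hδ1 _ Ψ hΨ0 hΨ Φ hΦ0 hΦ s hs _ k hk Υ hΥ
  have hδε : δ ^ ε ≤ 1 := Real.rpow_le_one hδ0.le hδ1.le hε.le
  have hΨ01 := (Ψ 0).continuous.add (Ψ 1).continuous
  have hF := (weightedLIntegral_funI_le hN0 hδ0 hδ1.le hΨ01).trans
    (weightedLIntegral_add_le_three_mul hN0 (by positivity) hδε hΨ0 (by simpa using hΨ 1 le_rfl))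
  have hG := (weightedLIntegral_funI_le hN0 hδ0 hδ1.le (Φ k).continuous).trans
    (weightedLIntegral_le_two_mul_of_fourier_eq_dyadic hN0 hΦ0 hΦ k)
  have hU := (weightedLIntegral_funI_le hN0 hδ0 hδ1.le Υ.continuous).trans
    (weightedLIntegral_le_of_decay (one_add_norm_pow_mul_le_of_memS (by omega) hΥ))
  have hη := (weightedLIntegral_convolution_convolution_le hN0
    (ContinuousLinearMap.opNorm_mul_le ℝ ℂ) (ContinuousLinearMap.opNorm_mul_le ℝ ℂ)
    hΨ01.funI.aestronglyMeasurable (Φ k).continuous.funI.aestronglyMeasurable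
    Υ.continuous.funI.aestronglyMeasurable).trans (mul_le_mul' (mul_le_mul' hF hG) hU)
  have hc : (2 : ℝ) ^ (-((k : ℝ) + 1)) ≤ 1 :=
    Real.rpow_le_one_of_one_le_of_nonpos one_le_two (by linarith [k.cast_nonneg (α := ℝ)])
  calc _ ≤ M.toReal := integral_one_add_mul_norm_rpow_mul_le (by positivity) hc hN0 hM hη
    _ ≤ (M.toReal + 1) * (δ ^ (-(2 * (N + 1) * ε)) * (2 : ℝ) ^ (-(k : ℝ))) :=
        (le_add_of_nonneg_right zero_le_one).trans <| le_mul_of_one_le_right (by positivity)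
          (one_le_rpow_mul_two_rpow hδ0 hδ1.le hε.le hN0 hk hs)
    _ = _ := (mul_assoc _ _ _).symm

theorem stmt_3
    (n : ℕ) (hn : 2 ≤ n) (ε : ℝ) (hε : 0 < ε)
    (φ : SchwartzMap (EuclideanSpace ℝ (Fin n)) ℂ)
    (hrad : ∀ x y : EuclideanSpace ℝ (Fin n), ‖x‖ = ‖y‖ → φ x = φ y)
    (hφ1 : ∀ ξ : EuclideanSpace ℝ (Fin n), ‖ξ‖ ≤ 1 → 𝓕 ⇑φ ξ = 1)
    (hφ0 : ∀ ξ : EuclideanSpace ℝ (Fin n), 2 ≤ ‖ξ‖ → 𝓕 ⇑φ ξ = 0)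
    (N : ℝ) (hN : 1 < N) :
    ∃ (α β : Fin n → ℕ) (C : ℝ), 0 < C ∧
      ∀ δ : ℝ, 0 < δ → δ < 1 → 2 ≤ δ ^ (-ε) →
      ∀ Ψ : ℕ → SchwartzMap (EuclideanSpace ℝ (Fin n)) ℂ,
        (∀ ξ, 𝓕 ⇑(Ψ 0) ξ = 𝓕 ⇑φ ξ) →
        (∀ k : ℕ, 1 ≤ k → ∀ ξ, 𝓕 ⇑(Ψ k) ξ =
          𝓕 ⇑φ ((δ ^ ((k : ℝ) * ε)) • ξ) - 𝓕 ⇑φ ((δ ^ (((k : ℝ) - 1) * ε)) • ξ)) →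
      ∀ Φ : ℕ → SchwartzMap (EuclideanSpace ℝ (Fin n)) ℂ,
        (∀ ξ, 𝓕 ⇑(Φ 0) ξ = 𝓕 ⇑φ ξ) →
        (∀ k : ℕ, 1 ≤ k → ∀ ξ, 𝓕 ⇑(Φ k) ξ =
          𝓕 ⇑φ (((2 : ℝ) ^ (-(k : ℝ))) • ξ) - 𝓕 ⇑φ (((2 : ℝ) ^ (1 - (k : ℝ))) • ξ)) →
      ∀ s : ℕ, (2 : ℝ) ^ s < δ ^ (-(2 * ε)) → δ ^ (-(2 * ε)) ≤ (2 : ℝ) ^ (s + 1) →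
      ∀ k : ℕ, k ≤ s →
      ∀ Υ : SchwartzMap (EuclideanSpace ℝ (Fin n)) ℂ, memS n α β Υ →
        (∫ x : EuclideanSpace ℝ (Fin n),
          (1 + (2 : ℝ) ^ (-((k : ℝ) + 1)) * ‖x‖) ^ N *
            ‖((funI n δ (⇑(Ψ 0) + ⇑(Ψ 1)) ⋆[ContinuousLinearMap.mul ℝ ℂ, volume] funI n δ ⇑(Φ k)) ⋆[ContinuousLinearMap.mul ℝ ℂ, volume] funI n δ ⇑Υ) x‖)
          ≤ C * δ ^ (-(2 * (N + 1) * ε)) * (2 : ℝ) ^ (-(k : ℝ)) :=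
  stmt_3_general n ε hε φ N hN
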